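/- If ω ∈ Ω_K is periodic with period p, then l := (1/p) Σ_{n=0}^{p−1} ω_n is an integer with 0 ≤ l ≤ K, and a(ω) = l. -/

import Mathlib

/-- The set `Ω_K`. -/
def OmegaK (K : ℕ) : Set (ℤ → ℤ) :=
  {ω | (∀ n, ω n ∈ Finset.Icc (0 : ℤ) (K : ℤ)) ∧ Function.Bijective (fun n => n + ω n)}

/-- `a(ω) = |{k = 1,…,K : ω_{-k} ≥ k}|`. -/
noncomputable def aOm (K : ℕ) (ω : ℤ → ℤ) : ℕ :=
  ((Finset.Icc (1 : ℤ) (K : ℤ)).filter (fun k => k ≤ ω (-k))).card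

/-!
Put `f n = n + ω n`, a bijection of `ℤ` with `n ≤ f n ≤ n + K`. The number of `n ≤ m` with
`m < f n` (the points jumping over the cut between `m` and `m + 1`) does not depend on `m`: moving
the cut one step, the preimage of `m + 1` stops jumping over it and `m + 1` starts to. At `m = -1`
this number is `a(ω)`. Summing it over the `p` cuts `m = 0, …, p - 1` counts the pairs `(n, m)` with
`0 ≤ m < p` and `n ≤ m < f n`; translating each pair by a multiple of `p` so that `0 ≤ n < p` turns
them, by periodicity, into the pairs with `0 ≤ n < p` and `n ≤ m < f n`, of which there are
`∑_{n<p} ω n`. Hence `p · a(ω) = ∑_{n<p} ω n`.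
-/

open Finset

/-- The points jumping over the cut after `m`; since `ω ≤ K`, they all lie in `[m - K, m]`. -/
noncomputable def crossing (K : ℕ) (ω : ℤ → ℤ) (m : ℤ) : Finset ℤ :=
  (Icc (m - K) m).filter (fun n => m < n + ω n)

lemma mem_crossing {K : ℕ} {ω : ℤ → ℤ} {m n : ℤ} :
    n ∈ crossing K ω m ↔ m - K ≤ n ∧ n ≤ m ∧ m < n + ω n := by
  simp [crossing, and_assoc]

lemma sum_Ico_natCast_eq_sum_range {M : Type*} [AddCommMonoid M] (p : ℕ) (g : ℤ → M) :
    ∑ n ∈ Ico (0 : ℤ) p, g n = ∑ n ∈ range p, g n := by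
  have hmap : (range p).map Nat.castEmbedding = Ico (0 : ℤ) p := by
    ext n
    simp only [mem_map, mem_range, Nat.castEmbedding_apply, mem_Ico]
    exact ⟨by rintro ⟨k, hk, rfl⟩; omega, fun h => ⟨n.toNat, by omega, by omega⟩⟩
  rw [← hmap, sum_map]
  rfl

section Crossing

variable {K : ℕ} {ω : ℤ → ℤ}

lemma nonneg_of_mem_OmegaK (hω : ω ∈ OmegaK K) (n : ℤ) : 0 ≤ ω n := (mem_Icc.mp (hω.1 n)).1

lemma le_of_mem_OmegaK (hω : ω ∈ OmegaK K) (n : ℤ) : ω n ≤ K := (mem_Icc.mp (hω.1 n)).2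

lemma aOm_le : aOm K ω ≤ K :=
  (card_filter_le _ _).trans_eq (by simp)

lemma aOm_eq_card_crossing (hωK : ∀ n, ω n ≤ K) : aOm K ω = #(crossing K ω (-1)) := by
  refine card_nbij' Neg.neg Neg.neg ?_ ?_ (fun _ _ => neg_neg _) (fun _ _ => neg_neg _)
  · intro k hk
    simp only [coe_filter, mem_Icc, Set.mem_ofPred_eq] at hk
    have := hωK (-k)
    simp only [mem_coe, mem_crossing]
    omega
  · intro n hn
    simp only [mem_coe, mem_crossing] at hn
    simp only [coe_filter, mem_Icc, Set.mem_ofPred_eq, neg_neg]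
    have := hωK n
    omega

lemma card_crossing_succ (hω : ω ∈ OmegaK K) (m : ℤ) :
    #(crossing K ω (m + 1)) = #(crossing K ω m) := by
  -- `m + 1` replaces the preimage `n₀` of `m + 1` (they coincide when `ω (m + 1) = 0`)
  obtain ⟨n₀, hn₀ : n₀ + ω n₀ = m + 1⟩ := hω.2.2 (m + 1)
  have hn₀_iff : ∀ n, n + ω n = m + 1 ↔ n = n₀ := fun n =>
    ⟨fun h => hω.2.1 (h.trans hn₀.symm), fun h => h ▸ hn₀⟩
  have := nonneg_of_mem_OmegaK hω n₀
  have := le_of_mem_OmegaK hω n₀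
  have := nonneg_of_mem_OmegaK hω (m + 1)
  have := hn₀_iff (m + 1)
  refine card_nbij' (fun n => if n = m + 1 then n₀ else n) (fun n => if n = n₀ then m + 1 else n)
    ?_ ?_ ?_ ?_ <;>
  · intro n hn
    simp only [mem_coe, mem_crossing] at hn ⊢
    have := hn₀_iff n
    have := le_of_mem_OmegaK hω n
    split_ifs <;> omega

lemma card_crossing_eq (hω : ω ∈ OmegaK K) (m m' : ℤ) :
    #(crossing K ω m) = #(crossing K ω m') := by
  have hper : Function.Periodic (fun m => #(crossing K ω m)) 1 := card_crossing_succ hω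
  simpa using (hper.int_mul m 0).trans (hper.int_mul m' 0).symm

lemma sum_card_crossing_eq_sum_card_Ico (hωK : ∀ n, ω n ≤ K) {p : ℤ}
    (hper : Function.Periodic ω p) :
    ∑ m ∈ Ico 0 p, #(crossing K ω m) = ∑ n ∈ Ico 0 p, #(Ico n (n + ω n)) := by
  have hshift : ∀ a b, ω (a - (b - b % p)) = ω a := fun a b => by
    rw [← Int.ediv_mul_self]
    exact hper.sub_int_mul_eq _
  have hshift_emod : ∀ a b, (a - (b - b % p)) % p = a % p := fun a b => by
    rw [← Int.ediv_mul_self, Int.sub_mul_emod_self_right]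
  have hemod : ∀ n, 0 < p → 0 ≤ n % p ∧ n % p < p := fun n hp =>
    ⟨Int.emod_nonneg n hp.ne', Int.emod_lt_of_pos n hp⟩
  -- `(m, n) ↦ (n % p, m - (n - n % p))` maps each set of pairs to the other and is an involution
  let reduce : (_ : ℤ) × ℤ → (_ : ℤ) × ℤ := fun x => ⟨x.2 % p, x.1 - (x.2 - x.2 % p)⟩
  rw [← card_sigma, ← card_sigma]
  refine card_nbij' reduce reduce ?_ ?_ ?_ ?_
  · rintro ⟨m, n⟩ h
    simp only [reduce, coe_sigma, Set.mem_sigma_iff, mem_coe, mem_Ico, mem_crossing] at h ⊢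
    have := hshift n n
    rw [sub_sub_cancel] at this
    have := hemod n (by omega)
    omega
  · rintro ⟨n, m⟩ h
    simp only [reduce, coe_sigma, Set.mem_sigma_iff, mem_coe, mem_Ico, mem_crossing] at h ⊢
    have := hshift n m
    have := hemod m (by omega)
    have := hωK n
    omega
  · rintro ⟨m, n⟩ h
    simp only [coe_sigma, Set.mem_sigma_iff, mem_coe, mem_Ico] at h
    simp [reduce, hshift_emod, Int.emod_eq_of_lt h.1.1 h.1.2]
  · rintro ⟨n, m⟩ h
    simp only [coe_sigma, Set.mem_sigma_iff, mem_coe, mem_Ico] at h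
    simp [reduce, hshift_emod, Int.emod_eq_of_lt h.1.1 h.1.2]

lemma sum_card_crossing_eq_sum (hω0 : ∀ n, 0 ≤ ω n) (hωK : ∀ n, ω n ≤ K) {p : ℤ}
    (hper : Function.Periodic ω p) :
    ∑ m ∈ Ico 0 p, (#(crossing K ω m) : ℤ) = ∑ n ∈ Ico 0 p, ω n := by
  rw [← Nat.cast_sum, sum_card_crossing_eq_sum_card_Ico hωK hper, Nat.cast_sum]
  exact sum_congr rfl fun n _ => by simp [hω0 n]

end Crossing

theorem periodic_average_general (K : ℕ) (ω : ℤ → ℤ) (hω : ω ∈ OmegaK K)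
    (p : ℕ) (hper : ∀ n : ℤ, ω (n + p) = ω n) :
    ∃ l : ℤ, 0 ≤ l ∧ l ≤ K ∧ (p : ℤ) * l = ∑ n ∈ Finset.range p, ω (n : ℤ) ∧
      (aOm K ω : ℤ) = l := by
  refine ⟨aOm K ω, Int.natCast_nonneg _, by exact_mod_cast aOm_le, ?_, rfl⟩
  calc (p : ℤ) * aOm K ω = ∑ m ∈ Ico (0 : ℤ) p, (#(crossing K ω m) : ℤ) := by
        simp [aOm_eq_card_crossing (le_of_mem_OmegaK hω), card_crossing_eq hω _ (-1)]
    _ = ∑ n ∈ Ico (0 : ℤ) p, ω n :=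
        sum_card_crossing_eq_sum (nonneg_of_mem_OmegaK hω) (le_of_mem_OmegaK hω) hper
    _ = ∑ n ∈ range p, ω n := sum_Ico_natCast_eq_sum_range p ω

/-- If `ω ∈ Ω_K` is periodic with period `p`, then `l := (1/p) Σ_{n=0}^{p-1} ω_n`
is an integer with `0 ≤ l ≤ K` and `a(ω) = l`. -/
theorem periodic_average (K : ℕ) (hK : 2 ≤ K) (ω : ℤ → ℤ) (hω : ω ∈ OmegaK K)
    (p : ℕ) (hp : 0 < p) (hper : ∀ n : ℤ, ω (n + p) = ω n) :
    ∃ l : ℤ, 0 ≤ l ∧ l ≤ K ∧ (p : ℤ) * l = ∑ n ∈ Finset.range p, ω (n : ℤ) ∧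
      (aOm K ω : ℤ) = l :=
  periodic_average_general K ω hω p hper
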